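/- arXiv:2401.03542 — 7 statements merged into one kernel-verified Lean document; each statement's English description precedes it below -/
import Mathlib

section
/- Let X : ℝ × [0,∞) → ℝ be continuous with X(x,0) = x for every x ∈ ℝ. Suppose that for every x ∈ ℝ the trajectory t ↦ X(x,t) is nonconstant and periodic with a positive period T(x), where T : ℝ → (0,∞) is continuous. If T is not constant, then there exist points x₁ ≠ x₂ in ℝ and a time t* > 0 such that X(x₁,t*) = X(x₂,t*). -/
open Set Filter Topology

/-!
If no two trajectories ever meet, then by the intermediate value theorem `x ↦ X x t` is strictly
increasing for every `t ≥ 0`. Fix `r` and times with `X r t₁ < X r t₂`. If `T y ≠ T r` for some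
`y > r` arbitrarily close to `r`, the intermediate value theorem yields such a `y` and a common
time `u = t₂ + n T(r) = t₁ + m T(y)`; at that time `X y u = X y t₁ ≈ X r t₁ < X r t₂ = X r u`,
contradicting monotonicity. So `T` is locally constant to the right everywhere, hence constant.
-/

lemma Continuous.apply_eq_of_forall_eventually_nhdsGT {α β : Type*}
    [ConditionallyCompleteLinearOrder α] [TopologicalSpace α] [OrderTopology α]
    [DenselyOrdered α] [TopologicalSpace β] [T1Space β] {f : α → β} (hf : Continuous f)
    (h : ∀ x, ∀ᶠ y in 𝓝[>] x, f y = f x) (a b : α) : f a = f b := by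
  wlog hab : a ≤ b generalizing a b
  · exact (this b a (le_of_not_ge hab)).symm
  have hsub : Icc a b ⊆ f ⁻¹' {f a} :=
    ((isClosed_singleton.preimage hf).inter isClosed_Icc).Icc_subset_of_forall_mem_nhdsWithin rfl
      fun x hx ↦ by
        filter_upwards [h x] with y hy
        rw [mem_preimage, mem_singleton_iff, hy, hx.1]
  exact (hsub ⟨hab, le_rfl⟩).symm

lemma exists_nat_btwn_of_add_one_lt {x y : ℝ} (hx : 0 ≤ x) (h : x + 1 < y) :
    ∃ n : ℕ, x < n ∧ (n : ℝ) < y :=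
  ⟨⌊x⌋₊ + 1, by push_cast; linarith [Nat.lt_floor_add_one x],
    by push_cast; linarith [Nat.floor_le hx]⟩

lemma exists_mem_Ioo_eq_natCast {g : ℝ → ℝ} {a b : ℝ} (hab : a ≤ b)
    (hg : ContinuousOn g (Icc a b)) (ha : 0 ≤ g a) (hb : 0 ≤ g b) (hgap : 1 < |g a - g b|) :
    ∃ y ∈ Ioo a b, ∃ m : ℕ, g y = m := by
  rcases le_total (g a) (g b) with hle | hle
  · obtain ⟨m, hm⟩ := exists_nat_btwn_of_add_one_lt (y := g b) ha
      (by rw [abs_of_nonpos (by linarith)] at hgap; linarith)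
    obtain ⟨y, hy, hgy⟩ := intermediate_value_Ioo hab hg hm
    exact ⟨y, hy, m, hgy⟩
  · obtain ⟨m, hm⟩ := exists_nat_btwn_of_add_one_lt (y := g a) hb
      (by rw [abs_of_nonneg (by linarith)] at hgap; linarith)
    obtain ⟨y, hy, hgy⟩ := intermediate_value_Ioo' hab hg hm
    exact ⟨y, hy, m, hgy⟩

lemma exists_add_nat_mul_eq_nat_mul {T : ℝ → ℝ} {a b : ℝ} (hab : a ≤ b)
    (hT : ContinuousOn T (Icc a b)) (hTpos : ∀ x ∈ Icc a b, 0 < T x) (hne : T a ≠ T b) (d : ℝ) :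
    ∃ y ∈ Ioo a b, ∃ n m : ℕ, d + n * T a = m * T y := by
  have hTa := hTpos a ⟨le_rfl, hab⟩
  have hTb := hTpos b ⟨hab, le_rfl⟩
  set δ := |1 / T a - 1 / T b|
  have hδ : 0 < δ := abs_pos.mpr (sub_ne_zero.mpr fun h ↦ hne (by simpa using h))
  -- for large `n`, `y ↦ (d + n T a) / T y` varies by more than `1` on `[a, b]`,
  -- so it takes a natural value strictly inside
  obtain ⟨n, hn⟩ := exists_nat_gt ((|d| + 1 / δ) / T a)
  set A := d + n * T a
  have hAδ : 1 < A * δ := by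
    rw [div_lt_iff₀ hTa] at hn
    rw [← div_lt_iff₀ hδ]
    linarith [neg_abs_le d]
  have hA : 0 < A := pos_of_mul_pos_left (one_pos.trans hAδ) hδ.le
  have hg : ContinuousOn (fun y ↦ A / T y) (Icc a b) :=
    continuousOn_const.div hT fun x hx ↦ (hTpos x hx).ne'
  have hgap : 1 < |A / T a - A / T b| := by
    rwa [div_eq_mul_one_div A, div_eq_mul_one_div A, ← mul_sub, abs_mul, abs_of_pos hA]
  obtain ⟨y, hy, m, hm⟩ :=
    exists_mem_Ioo_eq_natCast hab hg (by positivity) (by positivity) hgap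
  refine ⟨y, hy, n, m, ?_⟩
  rw [div_eq_iff (hTpos y (Ioo_subset_Icc_self hy)).ne'] at hm
  exact hm

lemma apply_add_nat_mul_period {α : Type*} {f : ℝ → α} {T : ℝ} (hT : 0 ≤ T)
    (hper : ∀ t ∈ Ici (0 : ℝ), f (t + T) = f t) {t : ℝ} (ht : 0 ≤ t) (n : ℕ) :
    f (t + n * T) = f t := by
  induction n with
  | zero => simp
  | succ n ih =>
    rw [Nat.cast_succ, add_one_mul, ← add_assoc,
      hper _ (by simp only [mem_Ici]; positivity), ih]

lemma strictMono_of_forall_ne {X : ℝ → ℝ → ℝ} (hXt : ∀ x, ContinuousOn (X x) (Ici 0))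
    (hX0 : ∀ x, X x 0 = x) (hdisj : ∀ x₁ x₂, x₁ ≠ x₂ → ∀ t, 0 < t → X x₁ t ≠ X x₂ t)
    {t : ℝ} (ht : 0 ≤ t) : StrictMono (X · t) := by
  intro x₁ x₂ hx
  by_contra! hle
  have hg : ContinuousOn (fun s ↦ X x₂ s - X x₁ s) (Icc 0 t) :=
    ((hXt x₂).sub (hXt x₁)).mono Icc_subset_Ici_self
  obtain ⟨s, hs, hgs⟩ := intermediate_value_Icc' ht hg
    ⟨sub_nonpos.mpr hle, by simp only [hX0]; linarith⟩
  have hs0 : s ≠ 0 := by rintro rfl; simp only [hX0] at hgs; linarith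
  exact hdisj x₁ x₂ hx.ne s (lt_of_le_of_ne hs.1 hs0.symm) (sub_eq_zero.mp hgs).symm

lemma eventually_nhdsGT_period_eq {X : ℝ → ℝ → ℝ} {T : ℝ → ℝ} (hTcont : Continuous T)
    (hTpos : ∀ x, 0 < T x) (hper : ∀ x, ∀ t ∈ Ici (0 : ℝ), X x (t + T x) = X x t)
    (hmono : ∀ u, 0 ≤ u → StrictMono (X · u)) {r t₁ t₂ : ℝ} (ht₁ : 0 ≤ t₁) (ht₂ : 0 ≤ t₂)
    (hcont : ContinuousAt (X · t₁) r) (hlt : X r t₁ < X r t₂) :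
    ∀ᶠ y in 𝓝[>] r, T y = T r := by
  obtain ⟨b, hrb, hb⟩ := mem_nhdsGT_iff_exists_Ioo_subset.mp
    (nhdsWithin_le_nhds (hcont.eventually_lt continuousAt_const hlt))
  filter_upwards [Ioo_mem_nhdsGT hrb] with y₁ hy₁
  by_contra hne
  obtain ⟨y, hy, n, m, hres⟩ := exists_add_nat_mul_eq_nat_mul hy₁.1.le
    hTcont.continuousOn (fun x _ ↦ hTpos x) (Ne.symm hne) (t₂ - t₁)
  have hu : t₂ + n * T r = t₁ + m * T y := by linarith
  have hcross : X r (t₂ + n * T r) < X y (t₂ + n * T r) :=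
    hmono _ (add_nonneg ht₂ (mul_nonneg n.cast_nonneg (hTpos r).le)) hy.1
  rw [apply_add_nat_mul_period (hTpos r).le (hper r) ht₂ n, hu,
    apply_add_nat_mul_period (hTpos y).le (hper y) ht₁ m] at hcross
  exact (hcross.trans (hb ⟨hy.1, hy.2.trans hy₁.2⟩)).false

/-- If every trajectory `t ↦ X x t` is nonconstant and periodic with a positive
period `T x` depending continuously on `x`, and `T` is not constant, then two
distinct trajectories meet at the same positive time. -/
theorem periodic_characteristics_intersect
    (X : ℝ → ℝ → ℝ) (T : ℝ → ℝ)
    (hXcont : ContinuousOn (fun p : ℝ × ℝ => X p.1 p.2) (univ ×ˢ Ici 0))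
    (hX0 : ∀ x, X x 0 = x)
    (hTpos : ∀ x, 0 < T x)
    (hTcont : Continuous T)
    (hper : ∀ x, ∀ t ∈ Ici (0:ℝ), X x (t + T x) = X x t)
    (hnonconst : ∀ x, ∃ t₁ ∈ Ici (0:ℝ), ∃ t₂ ∈ Ici (0:ℝ), X x t₁ ≠ X x t₂)
    (hTnonconst : ∃ a b : ℝ, T a ≠ T b) :
    ∃ x₁ x₂ : ℝ, x₁ ≠ x₂ ∧ ∃ t : ℝ, 0 < t ∧ X x₁ t = X x₂ t := by
  by_contra! hdisj
  have hXt (x : ℝ) : ContinuousOn (X x) (Ici 0) :=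
    hXcont.comp (continuous_const.prodMk continuous_id).continuousOn
      fun _ ht ↦ ⟨mem_univ _, ht⟩
  have hXx {t : ℝ} (ht : 0 ≤ t) : Continuous (X · t) :=
    continuousOn_univ.mp <| hXcont.comp (continuous_id.prodMk continuous_const).continuousOn
      fun _ _ ↦ ⟨mem_univ _, ht⟩
  have hmono (u : ℝ) (hu : 0 ≤ u) : StrictMono (X · u) :=
    strictMono_of_forall_ne hXt hX0 hdisj hu
  have hloc (r : ℝ) : ∀ᶠ y in 𝓝[>] r, T y = T r := by
    obtain ⟨t₁, ht₁, t₂, ht₂, h⟩ := hnonconst r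
    rcases h.lt_or_gt with hlt | hlt
    · exact eventually_nhdsGT_period_eq hTcont hTpos hper hmono ht₁ ht₂
        (hXx ht₁).continuousAt hlt
    · exact eventually_nhdsGT_period_eq hTcont hTpos hper hmono ht₂ ht₁
        (hXx ht₂).continuousAt hlt
  obtain ⟨a, b, hab⟩ := hTnonconst
  exact hab (hTcont.apply_eq_of_forall_eventually_nhdsGT hloc a b)
end

section
/- Let c : ℝ → ℝ be continuous and x₀ ∈ ℝ. Define 𝒞(y) = ∫_{x₀}^{y} c(ξ) dξ and τ(y) = −(y − x₀)³ · (𝒞(y) − c(x₀)·(y − x₀)). Then τ(y) = 0 for all y ∈ ℝ if and only if c(x) = c(x₀) for all x ∈ ℝ, i.e., if and only if c is constant. -/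
/-- The Sabatini isochronicity function
`τ(y) = -(y-x₀)³ (𝒞(y) - c(x₀)(y-x₀))`, with `𝒞(y) = ∫_{x₀}^y c`, vanishes
identically if and only if the doping profile `c` is constant. -/
theorem sabatini_vanishes_iff_constant
    (c : ℝ → ℝ) (hc : Continuous c) (x₀ : ℝ) :
    (∀ y : ℝ, -(y - x₀)^3 * ((∫ ξ in x₀..y, c ξ) - c x₀ * (y - x₀)) = 0)
      ↔ (∀ x : ℝ, c x = c x₀) := by
  constructor
  · intro h x
    have hF : ∀ y : ℝ, (∫ ξ in x₀..y, c ξ) - c x₀ * (y - x₀) = 0 := by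
      intro y
      rcases eq_or_ne y x₀ with rfl | hy
      · simp
      · have := h y
        have h3 : -(y - x₀)^3 ≠ 0 := by
          simp [sub_eq_zero, hy]
        exact (mul_eq_zero.mp this).resolve_left h3
    have hder : HasDerivAt (fun y => (∫ ξ in x₀..y, c ξ) - c x₀ * (y - x₀))
        (c x - c x₀) x := by
      have h1 : HasDerivAt (fun y => ∫ ξ in x₀..y, c ξ) (c x) x :=
        intervalIntegral.integral_hasDerivAt_right (hc.intervalIntegrable _ _)
          (hc.stronglyMeasurableAtFilter _ _) hc.continuousAt
      have h2 : HasDerivAt (fun y : ℝ => c x₀ * (y - x₀)) (c x₀) x := by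
        simpa using ((hasDerivAt_id x).sub_const x₀).const_mul (c x₀)
      exact h1.sub h2
    have h0 : HasDerivAt (fun y => (∫ ξ in x₀..y, c ξ) - c x₀ * (y - x₀)) 0 x := by
      have : (fun y => (∫ ξ in x₀..y, c ξ) - c x₀ * (y - x₀)) = fun _ => (0:ℝ) :=
        funext hF
      rw [this]; exact hasDerivAt_const x 0
    have := hder.unique h0
    linarith
  · intro h y
    have : (∫ ξ in x₀..y, c ξ) = c x₀ * (y - x₀) := by
      rw [intervalIntegral.integral_congr (g := fun _ => c x₀) (fun ξ _ => h ξ)]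
      simp [mul_comm]
    rw [this]; ring
end

section
/- Let c : ℝ → ℝ be continuously differentiable, let I = [0,T] with T > 0, and let x, V : I → ℝ be continuous. Suppose v, e : I → ℝ are differentiable and satisfy v'(t) = −v(t)² − e(t) and e'(t) = −e(t)·v(t) + c(x(t))·v(t) + c'(x(t))·V(t) on I. Define Q(t) = exp(∫₀ᵗ v(s) ds). Then Q(t) > 0 on I, Q(0) = 1, Q'(0) = v(0), Q''(0) = −e(0), and Q satisfies the linear equation Q'''(t) + c(x(t))·Q'(t) + c'(x(t))·V(t)·Q(t) = 0 on I. In particular, as long as the Riccati system has a finite solution, its linearization Q stays positive. -/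
/-!
Write `Q = exp (∫₀ᵗ v)`, so that `Q' = v Q`. For any differentiable `f`, `(f Q)' = (f' + f v) Q`.
Taking `f = v` and using `v' = -v² - e` gives `Q'' = -e Q`; taking `f = -e` and using the
equation for `e'` gives `Q''' = -(c(x) v + c'(x) V) Q = -c(x) Q' - c'(x) V Q`.
-/

open Set

theorem ContinuousOn.hasDerivWithinAt_integral_Icc {E : Type*} [NormedAddCommGroup E]
    [NormedSpace ℝ E] [CompleteSpace E] {f : ℝ → E} {a b t₀ t : ℝ}
    (hf : ContinuousOn f (Icc a b)) (ht₀ : t₀ ∈ Icc a b) (ht : t ∈ Icc a b) :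
    HasDerivWithinAt (fun u => ∫ s in t₀..u, f s) (f t) (Icc a b) t := by
  have : Fact (t ∈ Icc a b) := ⟨ht⟩
  exact intervalIntegral.integral_hasDerivWithinAt_right
    ((hf.mono (uIcc_subset_Icc ht₀ ht)).intervalIntegrable)
    (hf.stronglyMeasurableAtFilter_nhdsWithin measurableSet_Icc t) (hf t ht)

theorem HasDerivWithinAt.mul_of_hasDerivWithinAt_eq_mul {f Q g : ℝ → ℝ} {f' : ℝ} {s : Set ℝ}
    {t : ℝ} (hf : HasDerivWithinAt f f' s t) (hQ : HasDerivWithinAt Q (g t * Q t) s t) :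
    HasDerivWithinAt (fun u => f u * Q u) ((f' + f t * g t) * Q t) s t :=
  (hf.fun_mul hQ).congr_deriv (by ring)

theorem riccati_to_radon_linearization_general
    (c : ℝ → ℝ)
    (T : ℝ)
    (x V : ℝ → ℝ)
    (v e : ℝ → ℝ)
    (hv : ∀ t ∈ Icc (0:ℝ) T,
      HasDerivWithinAt v (-(v t)^2 - e t) (Icc 0 T) t)
    (he : ∀ t ∈ Icc (0:ℝ) T,
      HasDerivWithinAt e
        (-(e t) * v t + c (x t) * v t + deriv c (x t) * V t) (Icc 0 T) t) :
    (∀ t ∈ Icc (0:ℝ) T, 0 < Real.exp (∫ s in (0:ℝ)..t, v s)) ∧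
    Real.exp (∫ s in (0:ℝ)..(0:ℝ), v s) = 1 ∧
    ∃ Q1 Q2 Q3 : ℝ → ℝ,
      (∀ t ∈ Icc (0:ℝ) T,
        HasDerivWithinAt (fun u => Real.exp (∫ s in (0:ℝ)..u, v s)) (Q1 t)
          (Icc 0 T) t) ∧
      (∀ t ∈ Icc (0:ℝ) T, HasDerivWithinAt Q1 (Q2 t) (Icc 0 T) t) ∧
      (∀ t ∈ Icc (0:ℝ) T, HasDerivWithinAt Q2 (Q3 t) (Icc 0 T) t) ∧
      Q1 0 = v 0 ∧ Q2 0 = -(e 0) ∧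
      (∀ t ∈ Icc (0:ℝ) T,
        Q3 t + c (x t) * Q1 t
          + deriv c (x t) * V t * Real.exp (∫ s in (0:ℝ)..t, v s) = 0) := by
  set Q : ℝ → ℝ := fun u => Real.exp (∫ s in (0:ℝ)..u, v s)
  have hQ0 : Q 0 = 1 := by simp [Q]
  have hQ' (t : ℝ) (ht : t ∈ Icc 0 T) : HasDerivWithinAt Q (v t * Q t) (Icc 0 T) t := by
    have hv_cont : ContinuousOn v (Icc 0 T) := fun t ht => (hv t ht).continuousWithinAt
    simpa only [mul_comm] using
      (hv_cont.hasDerivWithinAt_integral_Icc (left_mem_Icc.2 (ht.1.trans ht.2)) ht).exp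
  refine ⟨fun t _ => Real.exp_pos _, hQ0, fun t => v t * Q t, fun t => -e t * Q t,
    fun t => -(c (x t) * v t + deriv c (x t) * V t) * Q t, hQ', ?_, ?_, by simp [hQ0],
    by simp [hQ0], fun t _ => by ring⟩
  · exact fun t ht =>
      ((hv t ht).mul_of_hasDerivWithinAt_eq_mul (hQ' t ht)).congr_deriv (by ring)
  · exact fun t ht =>
      ((he t ht).fun_neg.mul_of_hasDerivWithinAt_eq_mul (hQ' t ht)).congr_deriv (by ring)

/-- If `v, e` solve the Riccati system `v' = -v² - e`,
`e' = -e v + c(x(t)) v + c'(x(t)) V(t)` on `[0,T]`, then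
`Q t = exp (∫₀ᵗ v)` is positive, satisfies `Q 0 = 1`, `Q' 0 = v 0`,
`Q'' 0 = -e 0`, and solves the linear equation
`Q''' + c(x(t)) Q' + c'(x(t)) V(t) Q = 0` on `[0,T]`. -/
theorem riccati_to_radon_linearization
    (c : ℝ → ℝ) (hc : ContDiff ℝ 1 c)
    (T : ℝ) (hT : 0 < T)
    (x V : ℝ → ℝ)
    (hx : ContinuousOn x (Icc 0 T)) (hV : ContinuousOn V (Icc 0 T))
    (v e : ℝ → ℝ)
    (hv : ∀ t ∈ Icc (0:ℝ) T,
      HasDerivWithinAt v (-(v t)^2 - e t) (Icc 0 T) t)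
    (he : ∀ t ∈ Icc (0:ℝ) T,
      HasDerivWithinAt e
        (-(e t) * v t + c (x t) * v t + deriv c (x t) * V t) (Icc 0 T) t) :
    (∀ t ∈ Icc (0:ℝ) T, 0 < Real.exp (∫ s in (0:ℝ)..t, v s)) ∧
    Real.exp (∫ s in (0:ℝ)..(0:ℝ), v s) = 1 ∧
    ∃ Q1 Q2 Q3 : ℝ → ℝ,
      (∀ t ∈ Icc (0:ℝ) T,
        HasDerivWithinAt (fun u => Real.exp (∫ s in (0:ℝ)..u, v s)) (Q1 t)
          (Icc 0 T) t) ∧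
      (∀ t ∈ Icc (0:ℝ) T, HasDerivWithinAt Q1 (Q2 t) (Icc 0 T) t) ∧
      (∀ t ∈ Icc (0:ℝ) T, HasDerivWithinAt Q2 (Q3 t) (Icc 0 T) t) ∧
      Q1 0 = v 0 ∧ Q2 0 = -(e 0) ∧
      (∀ t ∈ Icc (0:ℝ) T,
        Q3 t + c (x t) * Q1 t
          + deriv c (x t) * V t * Real.exp (∫ s in (0:ℝ)..t, v s) = 0) :=
  riccati_to_radon_linearization_general c T x V v e hv he
end

section
/- Let C > 0 and a, b ∈ ℝ, and let Q : [0,∞) → ℝ be twice differentiable with Q''(t) + C·Q(t) = C − b for all t ≥ 0, Q(0) = 1 and Q'(0) = a. If a² + 2b < C, then Q(t) > 0 for all t ≥ 0. -/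
open Set

/-!
The energy `C Q'² + (C Q - (C - b))²` of the oscillator `Q'' + C Q = C - b` is conserved, and
initially it equals `C a² + b²`. If `Q` vanished or became negative, the energy would be at least
`(C - b)²`, which exceeds `C a² + b²` exactly when `a² + 2b < C`.
-/

/-- Energy of the oscillator `q'' + C q = k` at position `q` and velocity `p`. -/
def oscillatorEnergy (C k q p : ℝ) : ℝ := C * p ^ 2 + (C * q - k) ^ 2

lemma hasDerivWithinAt_oscillatorEnergy {C k : ℝ} {q p : ℝ → ℝ} {s : Set ℝ} {t : ℝ}
    (hq : HasDerivWithinAt q (p t) s t) (hp : HasDerivWithinAt p (k - C * q t) s t) :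
    HasDerivWithinAt (fun u => oscillatorEnergy C k (q u) (p u)) 0 s t := by
  have h := ((hp.pow 2).const_mul C).add (((hq.const_mul C).sub_const k).pow 2)
  refine h.congr_deriv ?_
  push_cast
  ring

lemma eq_of_hasDerivWithinAt_zero_Ici {f : ℝ → ℝ} {a : ℝ}
    (hf : ∀ t ∈ Ici a, HasDerivWithinAt f 0 (Ici a) t) : ∀ t ∈ Ici a, f t = f a := by
  intro t ht
  have hcont : ContinuousOn f (Icc a t) := fun u hu =>
    ((hf u hu.1).continuousWithinAt).mono Icc_subset_Ici_self
  refine constant_of_has_deriv_right_zero hcont (fun u hu => ?_) t (right_mem_Icc.2 ht)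
  exact (hf u hu.1).mono (Ici_subset_Ici.2 hu.1)

lemma oscillatorEnergy_eq_of_hasDerivWithinAt {C k : ℝ} {q p : ℝ → ℝ}
    (hq : ∀ t ∈ Ici (0 : ℝ), HasDerivWithinAt q (p t) (Ici 0) t)
    (hp : ∀ t ∈ Ici (0 : ℝ), HasDerivWithinAt p (k - C * q t) (Ici 0) t) :
    ∀ t ∈ Ici (0 : ℝ), oscillatorEnergy C k (q t) (p t) = oscillatorEnergy C k (q 0) (p 0) :=
  eq_of_hasDerivWithinAt_zero_Ici fun t ht =>
    hasDerivWithinAt_oscillatorEnergy (hq t ht) (hp t ht)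

lemma sq_le_oscillatorEnergy_of_nonpos {C k q : ℝ} (p : ℝ) (hC : 0 ≤ C) (hk : 0 ≤ k)
    (hq : q ≤ 0) : k ^ 2 ≤ oscillatorEnergy C k q p := by
  have hCq : C * q ≤ 0 := mul_nonpos_of_nonneg_of_nonpos hC hq
  unfold oscillatorEnergy
  nlinarith [mul_nonneg hC (sq_nonneg p)]

/-- For constant doping profile `C > 0`: if `Q'' + C Q = C - b`, `Q 0 = 1`,
`Q' 0 = a`, and `a² + 2b < C`, then `Q` stays positive for all `t ≥ 0`. -/
theorem constant_doping_Q_positive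
    (C a b : ℝ) (hC : 0 < C)
    (Q Q1 : ℝ → ℝ)
    (hQ1 : ∀ t ∈ Ici (0:ℝ), HasDerivWithinAt Q (Q1 t) (Ici 0) t)
    (hQ2 : ∀ t ∈ Ici (0:ℝ), HasDerivWithinAt Q1 (C - b - C * Q t) (Ici 0) t)
    (hQ0 : Q 0 = 1) (hQ10 : Q1 0 = a)
    (hcrit : a^2 + 2*b < C) :
    ∀ t ∈ Ici (0:ℝ), 0 < Q t := by
  intro t ht
  have hconserved := oscillatorEnergy_eq_of_hasDerivWithinAt hQ1 hQ2 t ht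
  have hinitial : oscillatorEnergy C (C - b) (Q 0) (Q1 0) < (C - b) ^ 2 := by
    rw [hQ0, hQ10, oscillatorEnergy]
    nlinarith
  by_contra! hneg
  have hb : 0 ≤ C - b := by nlinarith [sq_nonneg a]
  have := sq_le_oscillatorEnergy_of_nonpos (Q1 t) hC.le hb hneg
  linarith
end

section
/- Let C > 0 and a, b ∈ ℝ, and let Q : [0,∞) → ℝ be twice differentiable with Q''(t) + C·Q(t) = C − b for all t ≥ 0, Q(0) = 1 and Q'(0) = a. If a² + 2b > C, then there exists t* ∈ (0, 2π/√C] with Q(t*) = 0. -/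
/-!
Let `ω = √C`, `p = b / C` and `q = a / ω`. The initial value problem has the explicit solution
`1 - p + p cos (ω t) + q sin (ω t)`, and any solution on `[0, ∞)` equals it because the energy
`u'² + C u²` of the difference `u` is conserved and vanishes at `0`. Writing `(p, q)` in polar
form `R (cos φ, sin φ)`, the explicit solution attains its minimum `1 - p - R` at
`t = (φ + π) / ω`, which lies in `(0, 2π/ω]`; the condition `a² + 2b > C` is exactly
`(1 - p)² < R²`, so this minimum is negative and the intermediate value theorem gives the zero.
-/

open Set Real

theorem eqOn_of_hasDerivWithinAt_harmonic {C D : ℝ} (hC : 0 < C) {y y₁ z z₁ : ℝ → ℝ}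
    (hy : ∀ t ∈ Ici (0 : ℝ), HasDerivWithinAt y (y₁ t) (Ici 0) t)
    (hy₁ : ∀ t ∈ Ici (0 : ℝ), HasDerivWithinAt y₁ (D - C * y t) (Ici 0) t)
    (hz : ∀ t ∈ Ici (0 : ℝ), HasDerivWithinAt z (z₁ t) (Ici 0) t)
    (hz₁ : ∀ t ∈ Ici (0 : ℝ), HasDerivWithinAt z₁ (D - C * z t) (Ici 0) t)
    (h₀ : y 0 = z 0) (h₁₀ : y₁ 0 = z₁ 0) : EqOn y z (Ici 0) := by
  set energy : ℝ → ℝ := fun t => (y₁ t - z₁ t) ^ 2 + C * (y t - z t) ^ 2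
  have henergy : ∀ t ∈ Ici (0 : ℝ), HasDerivWithinAt energy 0 (Ici 0) t := fun t ht =>
    ((((hy₁ t ht).sub (hz₁ t ht)).pow 2).add
      (((hy t ht).sub (hz t ht)).pow 2 |>.const_mul C)).congr_deriv
        (by simp only [Pi.sub_apply]; ring)
  have henergy_zero : ∀ t ∈ Ici (0 : ℝ), energy t = 0 := by
    intro t ht
    have hconst := constant_of_has_deriv_right_zero
      (fun s hs => (henergy s hs.1).continuousWithinAt.mono Icc_subset_Ici_self)
      (fun s hs => (henergy s hs.1).mono (Ici_subset_Ici.2 hs.1)) t ⟨ht, le_rfl⟩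
    simpa [energy, h₀, h₁₀] using hconst
  intro t ht
  have hsq : C * (y t - z t) ^ 2 = 0 := by
    have := henergy_zero t ht
    nlinarith [sq_nonneg (y₁ t - z₁ t), mul_nonneg hC.le (sq_nonneg (y t - z t))]
  simpa [hC.ne', sub_eq_zero] using hsq

theorem hasDerivAt_cos_add_sin (ω p q t : ℝ) :
    HasDerivAt (fun t => p * cos (ω * t) + q * sin (ω * t))
      (ω * q * cos (ω * t) + -(ω * p) * sin (ω * t)) t := by
  have hlin := (hasDerivAt_id' t).const_mul ω
  exact ((hlin.cos.const_mul p).add (hlin.sin.const_mul q)).congr_deriv (by ring)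

theorem exists_mem_Ioc_cos_add_sin_eq_neg_sqrt (p q : ℝ) :
    ∃ θ ∈ Ioc 0 (2 * π), p * cos θ + q * sin θ = -√(p ^ 2 + q ^ 2) := by
  set z : ℂ := ⟨p, q⟩
  have hnorm : ‖z‖ = √(p ^ 2 + q ^ 2) := by
    rw [Complex.norm_def, Complex.normSq_mk, sq, sq]
  refine ⟨z.arg + π, ⟨by linarith [z.neg_pi_lt_arg], by linarith [z.arg_le_pi]⟩, ?_⟩
  have hp : ‖z‖ * cos z.arg = p := z.norm_mul_cos_arg
  have hq : ‖z‖ * sin z.arg = q := z.norm_mul_sin_arg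
  rw [cos_add_pi, sin_add_pi, ← hnorm, ← hp, ← hq]
  linear_combination (-‖z‖) * sin_sq_add_cos_sq z.arg

theorem one_sub_div_lt_sqrt_of_lt {C a b : ℝ} (hC : 0 < C) (h : C < a ^ 2 + 2 * b) :
    1 - b / C < √((b / C) ^ 2 + (a / √C) ^ 2) := by
  refine lt_sqrt_of_sq_lt ?_
  have hlt : 1 - 2 * (b / C) < a ^ 2 / C := by
    rw [lt_div_iff₀ hC]
    field_simp
    linarith
  rw [div_pow a, sq_sqrt hC.le]
  linear_combination hlt

/-- For constant doping profile `C > 0`: if `Q'' + C Q = C - b`, `Q 0 = 1`,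
`Q' 0 = a`, and `a² + 2b > C`, then `Q` vanishes at some
`t* ∈ (0, 2π/√C]`. -/
theorem constant_doping_Q_vanishes
    (C a b : ℝ) (hC : 0 < C)
    (Q Q1 : ℝ → ℝ)
    (hQ1 : ∀ t ∈ Ici (0:ℝ), HasDerivWithinAt Q (Q1 t) (Ici 0) t)
    (hQ2 : ∀ t ∈ Ici (0:ℝ), HasDerivWithinAt Q1 (C - b - C * Q t) (Ici 0) t)
    (hQ0 : Q 0 = 1) (hQ10 : Q1 0 = a)
    (hcrit : C < a^2 + 2*b) :
    ∃ t ∈ Ioc (0:ℝ) (2*π / Real.sqrt C), Q t = 0 := by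
  set ω := √C
  have hω : 0 < ω := sqrt_pos.2 hC
  have hω2 : ω ^ 2 = C := sq_sqrt hC.le
  set p := b / C
  set q := a / ω
  set f : ℝ → ℝ := fun t => 1 - p + (p * cos (ω * t) + q * sin (ω * t))
  have hQf : EqOn Q f (Ici 0) := by
    refine eqOn_of_hasDerivWithinAt_harmonic hC hQ1 hQ2
      (fun t _ => ((hasDerivAt_cos_add_sin ω p q t).const_add _).hasDerivWithinAt)
      (fun t _ => (hasDerivAt_cos_add_sin ω (ω * q) (-(ω * p)) t).hasDerivWithinAt.congr_deriv
        ?_)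
      (by simp [f, hQ0]) (by simp [q, hQ10, mul_div_cancel₀ _ hω.ne'])
    simp only [f, p, q]
    field_simp
    linear_combination (-(ω * b * cos (ω * t) + C * a * sin (ω * t))) * hω2
  obtain ⟨θ, ⟨hθ0, hθ⟩, hmin⟩ := exists_mem_Ioc_cos_add_sin_eq_neg_sqrt p q
  have hωθ : ω * (θ / ω) = θ := mul_div_cancel₀ θ hω.ne'
  have hR : 1 - p < √(p ^ 2 + q ^ 2) := one_sub_div_lt_sqrt_of_lt hC hcrit
  have hneg : Q (θ / ω) < 0 := by
    rw [hQf (div_nonneg hθ0.le hω.le)]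
    simp only [f, hωθ, hmin]
    linarith
  have hcont : ContinuousOn Q (Icc 0 (θ / ω)) := fun t ht =>
    (hQ1 t ht.1).continuousWithinAt.mono Icc_subset_Ici_self
  obtain ⟨t, ⟨ht0, htθ⟩, hQt⟩ :=
    intermediate_value_Ioo' (div_nonneg hθ0.le hω.le) hcont ⟨hneg, by rw [hQ0]; norm_num⟩
  exact ⟨t, ⟨ht0, htθ.le.trans (div_le_div_of_nonneg_right hθ hω.le)⟩, hQt⟩
end

section
/- Let C₁ ≠ 0 and C₂ be real numbers and define c(x) = (C₁x + C₂)^(−3/2) on the set where C₁x + C₂ > 0. Then for every x with C₁x + C₂ > 0 one has 5·(c'(x))² − 3·c(x)·c''(x) = 0; consequently the second-order period coefficient Ω(x) = (5·c'(x)² − 3·c(x)·c''(x))/(48·c(x)³) vanishes identically on this set. -/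
/-! For `c = u ^ p` with `u` affine of slope `a`, one has `c' = p a u^(p-1)` and
`c'' = p (p-1) a² u^(p-2)`, so `5 c'² - 3 c c'' = p (2p + 3) a² u^(2p-2)`, which vanishes
for the exponent `p = -3/2` whatever the slope. -/

open Topology

section AffineRpow

variable (a b p : ℝ) {x : ℝ}

theorem hasDerivAt_affine_rpow (hx : a * x + b ≠ 0) :
    HasDerivAt (fun y : ℝ => (a * y + b) ^ p) (p * (a * x + b) ^ (p - 1) * a) x := by
  have h_affine : HasDerivAt (fun y : ℝ => a * y + b) a x := by
    simpa using ((hasDerivAt_id x).const_mul a).add_const b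
  exact (Real.hasDerivAt_rpow_const (Or.inl hx)).comp x h_affine

theorem deriv_affine_rpow (hx : a * x + b ≠ 0) :
    deriv (fun y : ℝ => (a * y + b) ^ p) x = p * (a * x + b) ^ (p - 1) * a :=
  (hasDerivAt_affine_rpow a b p hx).deriv

theorem deriv_deriv_affine_rpow (hx : a * x + b ≠ 0) :
    deriv (deriv fun y : ℝ => (a * y + b) ^ p) x
      = p * ((p - 1) * (a * x + b) ^ (p - 1 - 1) * a) * a := by
  have h_nhds : ∀ᶠ y in 𝓝 x, a * y + b ≠ 0 :=
    ((continuous_const.mul continuous_id).add continuous_const).continuousAt.eventually_ne hx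
  have h_deriv : deriv (fun y : ℝ => (a * y + b) ^ p)
      =ᶠ[𝓝 x] fun y => p * (a * y + b) ^ (p - 1) * a := by
    filter_upwards [h_nhds] with y hy
    exact deriv_affine_rpow a b p hy
  rw [h_deriv.deriv_eq]
  exact (((hasDerivAt_affine_rpow a b (p - 1) hx).const_mul p).mul_const a).deriv

theorem five_mul_deriv_sq_sub_three_mul_deriv_deriv_affine_rpow (hx : 0 < a * x + b) :
    5 * (deriv (fun y : ℝ => (a * y + b) ^ p) x) ^ 2
        - 3 * (a * x + b) ^ p * deriv (deriv fun y : ℝ => (a * y + b) ^ p) x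
      = p * (2 * p + 3) * a ^ 2 * (a * x + b) ^ (2 * p - 2) := by
  have h_sq : ((a * x + b) ^ (p - 1)) ^ 2 = (a * x + b) ^ (2 * p - 2) := by
    rw [sq, ← Real.rpow_add hx]; ring_nf
  have h_mul : (a * x + b) ^ p * (a * x + b) ^ (p - 1 - 1) = (a * x + b) ^ (2 * p - 2) := by
    rw [← Real.rpow_add hx]; ring_nf
  rw [deriv_affine_rpow a b p hx.ne', deriv_deriv_affine_rpow a b p hx.ne']
  linear_combination (5 * p ^ 2 * a ^ 2) * h_sq - (3 * p * (p - 1) * a ^ 2) * h_mul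

end AffineRpow

theorem special_profile_Omega_vanishes_general
    (C₁ C₂ : ℝ) :
    ∀ x : ℝ, 0 < C₁ * x + C₂ →
      5 * (deriv (fun y : ℝ => (C₁ * y + C₂) ^ (-(3:ℝ)/2)) x)^2
          - 3 * ((C₁ * x + C₂) ^ (-(3:ℝ)/2))
            * deriv (deriv (fun y : ℝ => (C₁ * y + C₂) ^ (-(3:ℝ)/2))) x = 0 ∧
      (5 * (deriv (fun y : ℝ => (C₁ * y + C₂) ^ (-(3:ℝ)/2)) x)^2
          - 3 * ((C₁ * x + C₂) ^ (-(3:ℝ)/2))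
            * deriv (deriv (fun y : ℝ => (C₁ * y + C₂) ^ (-(3:ℝ)/2))) x)
        / (48 * ((C₁ * x + C₂) ^ (-(3:ℝ)/2))^3) = 0 := by
  intro x hx
  have h_numerator : 5 * (deriv (fun y : ℝ => (C₁ * y + C₂) ^ (-(3:ℝ)/2)) x)^2
      - 3 * ((C₁ * x + C₂) ^ (-(3:ℝ)/2))
        * deriv (deriv (fun y : ℝ => (C₁ * y + C₂) ^ (-(3:ℝ)/2))) x = 0 := by
    rw [five_mul_deriv_sq_sub_three_mul_deriv_deriv_affine_rpow C₁ C₂ _ hx]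
    ring
  exact ⟨h_numerator, by rw [h_numerator, zero_div]⟩

/-- For the doping profile `c x = (C₁ x + C₂)^(-3/2)` (on the set where
`C₁ x + C₂ > 0`) one has `5 c'(x)² - 3 c(x) c''(x) = 0`, hence the
second-order period coefficient
`Ω(x) = (5 c'(x)² - 3 c(x) c''(x)) / (48 c(x)³)` vanishes there. -/
theorem special_profile_Omega_vanishes
    (C₁ C₂ : ℝ) (hC₁ : C₁ ≠ 0) :
    ∀ x : ℝ, 0 < C₁ * x + C₂ →
      5 * (deriv (fun y : ℝ => (C₁ * y + C₂) ^ (-(3:ℝ)/2)) x)^2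
          - 3 * ((C₁ * x + C₂) ^ (-(3:ℝ)/2))
            * deriv (deriv (fun y : ℝ => (C₁ * y + C₂) ^ (-(3:ℝ)/2))) x = 0 ∧
      (5 * (deriv (fun y : ℝ => (C₁ * y + C₂) ^ (-(3:ℝ)/2)) x)^2
          - 3 * ((C₁ * x + C₂) ^ (-(3:ℝ)/2))
            * deriv (deriv (fun y : ℝ => (C₁ * y + C₂) ^ (-(3:ℝ)/2))) x)
        / (48 * ((C₁ * x + C₂) ^ (-(3:ℝ)/2))^3) = 0 :=
  special_profile_Omega_vanishes_general C₁ C₂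
end

section
/- Let c : ℝ → ℝ be continuous with c(x) > 0 for all x. If V, E : ℝ → ℝ are continuously differentiable and satisfy the stationary Euler–Poisson relations V(x)·V'(x) = −E(x) and V(x)·E'(x) = c(x)·V(x) for all x ∈ ℝ, then V(x) = 0 and E(x) = 0 for all x ∈ ℝ. In other words, the zero equilibrium is the only smooth stationary solution. -/
/-!
The energy `V²` has derivative `-2E`. Where `E ≠ 0`, the first equation forces `V ≠ 0`, so the
second one gives `E' = c > 0`; by continuity of `E'` this makes `E' ≥ 0` everywhere. Hence `E` is
nondecreasing and `V²` is concave. A concave function on `ℝ` that is bounded below is constant,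
so `E = 0`, and then `c V = 0` forces `V = 0`.
-/

open Set Topology

theorem deriv_nonneg_of_nonneg_on_support {f : ℝ → ℝ} (hf' : Continuous (deriv f))
    (h : ∀ x ∈ Function.support f, 0 ≤ deriv f x) (x : ℝ) : 0 ≤ deriv f x := by
  by_contra! hx
  have hzero : f =ᶠ[𝓝 x] 0 := by
    filter_upwards [hf'.continuousAt.eventually (gt_mem_nhds hx)] with y hy
    by_contra hfy
    exact (h y hfy).not_gt hy
  simp [hzero.deriv_eq] at hx

namespace ConcaveOn

theorem le_add_deriv_mul_sub {S : Set ℝ} {f : ℝ → ℝ} {x y : ℝ} (hf : ConcaveOn ℝ S f)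
    (hx : x ∈ S) (hy : y ∈ S) (hd : DifferentiableAt ℝ f x) :
    f y ≤ f x + deriv f x * (y - x) := by
  rcases lt_trichotomy y x with hyx | rfl | hxy
  · have := hf.deriv_le_slope hy hx hyx hd
    rw [slope_def_field, le_div_iff₀ (sub_pos.mpr hyx)] at this
    linarith
  · simp
  · have := hf.slope_le_deriv hx hy hxy hd
    rw [slope_def_field, div_le_iff₀ (sub_pos.mpr hxy)] at this
    linarith

theorem deriv_eq_zero_of_bddBelow {f : ℝ → ℝ} {x : ℝ} (hf : ConcaveOn ℝ univ f)
    (hd : DifferentiableAt ℝ f x) (hb : BddBelow (range f)) : deriv f x = 0 := by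
  obtain ⟨m, hm⟩ := hb
  by_contra hne
  -- the tangent line at `x` drops below `m` at this point
  set y := x - (f x - m + 1) / deriv f x
  have hy : deriv f x * (y - x) = -(f x - m + 1) := by
    simp only [y]
    field_simp
    ring
  have := hf.le_add_deriv_mul_sub (mem_univ x) (mem_univ y) hd
  linarith [hm (mem_range_self y)]

end ConcaveOn

theorem stationary_solution_trivial_general
    (c : ℝ → ℝ) (hcpos : ∀ x, 0 < c x)
    (V E : ℝ → ℝ) (hV : ContDiff ℝ 1 V) (hE : ContDiff ℝ 1 E)
    (h1 : ∀ x : ℝ, V x * deriv V x = -E x)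
    (h2 : ∀ x : ℝ, V x * deriv E x = c x * V x) :
    ∀ x : ℝ, V x = 0 ∧ E x = 0 := by
  have hVd : Differentiable ℝ V := hV.differentiable one_ne_zero
  have hE_deriv : ∀ x ∈ Function.support E, 0 ≤ deriv E x := fun x hx => by
    have hVx : V x ≠ 0 := fun h => hx (by simpa [h] using h1 x)
    rw [mul_left_cancel₀ hVx ((h2 x).trans (mul_comm _ _))]
    exact (hcpos x).le
  have hE_mono : Monotone E := monotone_of_deriv_nonneg (hE.differentiable one_ne_zero)
    (deriv_nonneg_of_nonneg_on_support (hE.continuous_deriv le_rfl) hE_deriv)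
  have hV2_deriv : deriv (fun x => V x ^ 2) = fun x => -2 * E x := funext fun x => by
    rw [deriv_fun_pow (hVd x), ← neg_eq_iff_eq_neg.mpr (h1 x)]
    ring
  have hV2_concave : ConcaveOn ℝ univ (fun x => V x ^ 2) :=
    Antitone.concaveOn_univ_of_deriv (hVd.pow 2) (by
      rw [hV2_deriv]
      exact fun a b hab => by linarith [hE_mono hab])
  have hE_zero : ∀ x, E x = 0 := fun x => by
    have := hV2_concave.deriv_eq_zero_of_bddBelow ((hVd.pow 2) x)
      ⟨0, by rintro _ ⟨y, rfl⟩; positivity⟩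
    rw [hV2_deriv] at this
    linarith
  obtain rfl : E = 0 := funext hE_zero
  intro x
  have hcV : c x * V x = 0 := by simpa using (h2 x).symm
  exact ⟨(mul_eq_zero.mp hcV).resolve_left (hcpos x).ne', rfl⟩

/-- The zero equilibrium is the only smooth stationary solution of the 1D
repulsive Euler–Poisson system with positive doping profile: if
`V V' = -E` and `V E' = c V` on ℝ with `c > 0`, then `V ≡ 0` and `E ≡ 0`. -/
theorem stationary_solution_trivial
    (c : ℝ → ℝ) (hc : Continuous c) (hcpos : ∀ x, 0 < c x)
    (V E : ℝ → ℝ) (hV : ContDiff ℝ 1 V) (hE : ContDiff ℝ 1 E)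
    (h1 : ∀ x : ℝ, V x * deriv V x = -E x)
    (h2 : ∀ x : ℝ, V x * deriv E x = c x * V x) :
    ∀ x : ℝ, V x = 0 ∧ E x = 0 :=
  stationary_solution_trivial_general c hcpos V E hV hE h1 h2
end
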